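/- If C = ∅ and A is nonempty (so some avoider set is empty) and K ≥ 2, then White has a winning strategy in Paintbucket on G_K(∅, A) when Black moves first. -/

import Mathlib

/-- A Paintbucket position: a colored graph on vertex type `V`, with a finite
set of live vertices, a coloring (`true` = black), and a boolean adjacency. -/
structure PB (V : Type) where
  verts : Finset V
  black : V → Bool
  adj : V → V → Bool

namespace PB

variable {V : Type} [DecidableEq V]

/-- The neighbors of `v` among the live vertices. -/
def nbrs (P : PB V) (v : V) : Finset V :=
  P.verts.filter fun w => P.adj v w = true

/-- The move of player `p` (`true` = Black) at vertex `v`: delete the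
neighbors of `v`, recolor `v` with the mover's color, and connect `v` to all
former neighbors of the deleted vertices. -/
def move (p : Bool) (P : PB V) (v : V) : PB V :=
  let del := P.nbrs v
  let vs := insert v (P.verts \ del)
  { verts := vs
    black := fun x => if x = v then p else P.black x
    adj := fun x y =>
      decide (x ∈ vs) && decide (y ∈ vs) && decide (x ≠ y) &&
        (if x = v then P.adj v y || decide (∃ w ∈ del, P.adj w y = true)
         else if y = v then P.adj v x || decide (∃ w ∈ del, P.adj w x = true)
         else P.adj x y) }

/-- Player `p` may move at `v` iff the game is not over (at least two vertices
remain), `v` is live, and `v` has the opponent's color. -/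
def legal (p : Bool) (P : PB V) (v : V) : Prop :=
  1 < P.verts.card ∧ v ∈ P.verts ∧ P.black v = !p

instance (p : Bool) (P : PB V) (v : V) : Decidable (legal p P v) := by
  unfold legal; infer_instance

/-- `blackWinsAux n p P`: with fuel `n` and player `p` to move, Black wins
with optimal play. When the game is over, Black wins iff the remaining vertex
is black. -/
def blackWinsAux : ℕ → Bool → PB V → Prop
  | 0, _, P => ∃ v ∈ P.verts, P.black v = true
  | n + 1, p, P =>
    if P.verts.card ≤ 1 then ∃ v ∈ P.verts, P.black v = true
    else if p then ∃ v, legal true P v ∧ blackWinsAux n false (move true P v)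
    else ∀ v, legal false P v → blackWinsAux n true (move false P v)

/-- Black wins with `p` to move (fuel `P.verts.card` suffices since every move
in a connected position removes at least one vertex). -/
def blackWins (p : Bool) (P : PB V) : Prop :=
  blackWinsAux P.verts.card p P

/-- The coloring is proper: edges join vertices of different colors. -/
def Bipartite (P : PB V) : Prop :=
  ∀ x y, P.adj x y = true → P.black x ≠ P.black y

/-- Any two live vertices are joined by a path. -/
def Connected (P : PB V) : Prop :=
  ∀ x ∈ P.verts, ∀ y ∈ P.verts,
    Relation.ReflTransGen (fun a b => P.adj a b = true) x y

/-- A valid Paintbucket position: symmetric irreflexive adjacency supported on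
the live vertices, properly two-colored, and connected. -/
def Valid (P : PB V) : Prop :=
  (∀ x y, P.adj x y = P.adj y x) ∧
  (∀ x, P.adj x x = false) ∧
  (∀ x y, P.adj x y = true → x ∈ P.verts ∧ y ∈ P.verts) ∧
  P.Bipartite ∧ P.Connected

/-- Isomorphism of colored positions. -/
def Isom {W : Type} (P : PB V) (Q : PB W) : Prop :=
  ∃ f : V → W, Set.BijOn f ↑P.verts ↑Q.verts ∧
    (∀ x ∈ P.verts, Q.black (f x) = P.black x) ∧
    ∀ x ∈ P.verts, ∀ y ∈ P.verts, Q.adj (f x) (f y) = P.adj x y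

/-- Play out a list of (player, vertex) moves. -/
def run (P : PB V) : List (Bool × V) → PB V
  | [] => P
  | m :: ms => run (move m.1 P m.2) ms

/-- All moves in the list are legal when played in order. -/
def legalRun (P : PB V) : List (Bool × V) → Prop
  | [] => True
  | m :: ms => legal m.1 P m.2 ∧ legalRun (move m.1 P m.2) ms

end PB

/-- Vertices of the gadget graph `G_K(C, A)`: `v i`, `u i` for cells `i`,
`w k` for `k < K`, `t j k` for avoider-set indices `j`, and `r`, `s`. -/
inductive GV (ι κ : Type) (K : ℕ) where
  | v : ι → GV ι κ K
  | u : ι → GV ι κ K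
  | w : Fin K → GV ι κ K
  | t : κ → Fin K → GV ι κ K
  | r : GV ι κ K
  | s : GV ι κ K
  deriving DecidableEq, Fintype

/-- Colors in the gadget graph: `v i`, `w k`, `r` are black; `u i`, `t j k`, `s` are white. -/
def Gblack {ι κ : Type} {K : ℕ} : GV ι κ K → Bool
  | .v _ => true
  | .w _ => true
  | .r => true
  | _ => false

/-- Orientation of the edges of the gadget graph. -/
def Gedge {ι κ : Type} [DecidableEq ι] {K : ℕ} (A : κ → Finset ι) :
    GV ι κ K → GV ι κ K → Bool
  | .r, .u _ => true
  | .v i, .u i' => decide (i = i')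
  | .v _, .s => true
  | .t _ _, .r => true
  | .s, .r => true
  | .t _ _, .w _ => true
  | .s, .w _ => true
  | .v i, .t j _ => decide (i ∈ A j)
  | _, _ => false

/-- The gadget position `G_K(C, A)`, where the cells are the elements of `ι`
and the avoider sets are `A j` for `j : κ`. -/
def GPos {ι κ : Type} [Fintype ι] [Fintype κ] [DecidableEq ι] [DecidableEq κ]
    (A : κ → Finset ι) (K : ℕ) : PB (GV ι κ K) :=
  { verts := Finset.univ
    black := Gblack
    adj := fun x y => Gedge A x y || Gedge A y x }

/-!
With no cells the gadget graph is complete bipartite between the black vertices `w k`, `r` and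
the white vertices `t j k`, `s`. Whatever white vertex Black paints first, the move deletes
every black vertex and joins the painted vertex to all surviving white vertices (at least
`s` and some `t j k`), so White repaints that vertex, deleting everything else, and the last
vertex standing is white.
-/

namespace PB

variable {V : Type} [DecidableEq V]

lemma blackWinsAux_iff_of_card_le_one (n : ℕ) (p : Bool) {P : PB V} (h : P.verts.card ≤ 1) :
    blackWinsAux n p P ↔ ∃ v ∈ P.verts, P.black v = true := by
  cases n <;> simp [blackWinsAux, h]

lemma move_verts (p : Bool) (P : PB V) (v : V) :
    (move p P v).verts = insert v (P.verts \ P.nbrs v) :=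
  rfl

lemma mem_move_verts_self (p : Bool) (P : PB V) (v : V) : v ∈ (move p P v).verts :=
  Finset.mem_insert_self _ _

lemma move_black_self (p : Bool) (P : PB V) (v : V) : (move p P v).black v = p := by
  simp [move]

lemma move_adj_self_of_mem_nbrs {p : Bool} {P : PB V} {v w y : V} (hw : w ∈ P.nbrs v)
    (hwy : P.adj w y = true) (hy : y ∈ (move p P v).verts) (hne : y ≠ v) :
    (move p P v).adj v y = true := by
  have hy' : y = v ∨ y ∈ P.verts ∧ y ∉ P.nbrs v := by simpa [move_verts] using hy
  simp only [move, if_true]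
  simpa [Ne.symm hne] using ⟨hy', Or.inr ⟨w, hw, hwy⟩⟩

lemma move_verts_eq_singleton {p : Bool} {P : PB V} {v : V}
    (h : ∀ y ∈ P.verts, y ≠ v → P.adj v y = true) : (move p P v).verts = {v} := by
  ext y
  simp only [move_verts, nbrs, Finset.mem_insert, Finset.mem_sdiff, Finset.mem_filter,
    Finset.mem_singleton]
  constructor
  · rintro (rfl | ⟨hy, hnot⟩)
    · rfl
    · by_contra hne
      exact hnot ⟨hy, h y hy hne⟩
  · exact Or.inl

lemma not_blackWinsAux_of_isolating_reply (n : ℕ) {P : PB V} (hP : 1 < P.verts.card)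
    (h : ∀ v, legal true P v → ∃ w, legal false (move true P v) w ∧
      (move false (move true P v) w).verts = {w}) :
    ¬ blackWinsAux (n + 2) true P := by
  simp only [blackWinsAux, if_neg hP.not_ge, if_true]
  rintro ⟨v, hv, hwin⟩
  obtain ⟨w, hw, hend⟩ := h v hv
  rw [if_neg hw.1.not_ge] at hwin
  have hlast := hwin w hw
  rw [blackWinsAux_iff_of_card_le_one _ _ (by simp [hend])] at hlast
  obtain ⟨x, hx, hxb⟩ := hlast
  rw [hend, Finset.mem_singleton] at hx
  subst hx
  simp [move_black_self] at hxb

end PB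

section Gadget

open PB

variable {ι κ : Type} [Fintype ι] [Fintype κ] [DecidableEq ι] [DecidableEq κ]
  (A : κ → Finset ι) (K : ℕ)

lemma GPos_verts : (GPos A K).verts = Finset.univ :=
  rfl

lemma GPos_adj [IsEmpty ι] (x y : GV ι κ K) : (GPos A K).adj x y = (Gblack x != Gblack y) := by
  cases x <;> cases y <;> first | exact isEmptyElim ‹ι› | rfl

variable [IsEmpty ι] {v : GV ι κ K}

lemma GPos_nbrs_of_white (hv : Gblack v = false) :
    (GPos A K).nbrs v = Finset.univ.filter (Gblack · = true) := by
  ext y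
  simp [nbrs, GPos_verts, GPos_adj, hv]

lemma GPos_move_verts (hv : Gblack v = false) :
    (move true (GPos A K) v).verts = Finset.univ.filter (Gblack · = false) := by
  ext y
  rw [move_verts, GPos_nbrs_of_white A K hv, GPos_verts]
  by_cases hy : y = v <;> simp [hy, hv]

lemma GPos_move_adj_self (hv : Gblack v = false) {y : GV ι κ K}
    (hy : y ∈ (move true (GPos A K) v).verts) (hne : y ≠ v) :
    (move true (GPos A K) v).adj v y = true := by
  have hwhite : Gblack y = false := by simpa [GPos_move_verts A K hv] using hy
  refine move_adj_self_of_mem_nbrs (w := .r) ?_ ?_ hy hne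
  · rw [GPos_nbrs_of_white A K hv]
    exact Finset.mem_filter.2 ⟨Finset.mem_univ _, rfl⟩
  · rw [GPos_adj, hwhite]
    rfl

lemma one_lt_card_GPos_move [Nonempty κ] (hK : 0 < K) (hv : Gblack v = false) :
    1 < (move true (GPos A K) v).verts.card := by
  obtain ⟨j⟩ := ‹Nonempty κ›
  rw [GPos_move_verts A K hv]
  exact Finset.one_lt_card.2 ⟨.s, Finset.mem_filter.2 ⟨Finset.mem_univ _, rfl⟩,
    .t j ⟨0, hK⟩, Finset.mem_filter.2 ⟨Finset.mem_univ _, rfl⟩, by simp⟩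

end Gadget

open PB in
/-- if `C = ∅`, the family of avoider sets is nonempty, and
`K ≥ 2`, then White wins Paintbucket on `G_K(∅, A)` when Black moves first. -/
theorem paintbucket_empty_cells
    {ι κ : Type} [Fintype ι] [Fintype κ] [DecidableEq ι] [DecidableEq κ]
    [IsEmpty ι] [Nonempty κ]
    (A : κ → Finset ι) (K : ℕ) (hK : 2 ≤ K) :
    ¬ blackWins true (GPos A K) := by
  have hcard : 1 < (GPos A K).verts.card :=
    Finset.one_lt_card.2 ⟨.r, Finset.mem_univ _, .s, Finset.mem_univ _, by simp⟩
  obtain ⟨n, hn⟩ : ∃ n, (GPos A K).verts.card = n + 2 := ⟨_, (Nat.sub_add_cancel hcard).symm⟩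
  rw [blackWins, hn]
  refine not_blackWinsAux_of_isolating_reply n hcard fun v hv => ⟨v, ?_, ?_⟩
  · exact ⟨one_lt_card_GPos_move A K (by omega) hv.2.2, mem_move_verts_self _ _ _,
      move_black_self _ _ _⟩
  · exact move_verts_eq_singleton fun y hy hne => GPos_move_adj_self A K hv.2.2 hy hne
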